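/- arXiv:1906.07265 — 3 statements merged into one kernel-verified Lean document; each statement's English description precedes it below -/
import Mathlib

section
/- There exists a universal constant C > 0 such that the following holds. Let P = X Xᵀ ∈ ℝ^{n×n} be a rank-d positive semidefinite matrix as in the context, with top-d eigenvector matrix U_P ∈ ℝ^{n×d}, and let M ∈ ℝ^{n×n} be a symmetric matrix whose d eigenvectors corresponding to its d largest eigenvalues form the columns of an orthonormal matrix U_M ∈ ℝ^{n×d}. Then there exists an orthogonal matrix V ∈ ℝ^{d×d} (one may take V = V₁V₂ᵀ, where U_Pᵀ U_M = V₁ D V₂ᵀ is a singular value decomposition) such that ‖U_Pᵀ U_M − V‖_F ≤ C d ‖M − P‖² / λ_d(P)². -/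
open Matrix
open scoped BigOperators

/-- The Frobenius norm of a real matrix. -/
noncomputable def frobNorm {m n : ℕ} (M : Matrix (Fin m) (Fin n) ℝ) : ℝ :=
  Real.sqrt (∑ i, ∑ j, (M i j) ^ 2)

/-- The spectral (ℓ2 operator) norm of a real square matrix. -/
noncomputable def specNorm {n : ℕ} (M : Matrix (Fin n) (Fin n) ℝ) : ℝ :=
  ‖Matrix.toEuclideanCLM (𝕜 := ℝ) M‖

/-- The first `d` columns of an `n × n` matrix. -/
def topCols {n d : ℕ} (hdn : d ≤ n) (W : Matrix (Fin n) (Fin n) ℝ) :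
    Matrix (Fin n) (Fin d) ℝ :=
  W.submatrix id (Fin.castLE hdn)


/-!
Write `A = U_Pᵀ U_M` and `T = (1 - U_P U_Pᵀ) U_M`; then `‖A c‖² + ‖T c‖² = ‖c‖²`.
If `2 ‖M - P‖ < λ_d(P)`, a Courant–Fischer (Weyl) argument puts the top `d` eigenvalues of `M`
above `λ_d(P) / 2`, and the Davis–Kahan identity `T D = (1 - U_P U_Pᵀ) (M - P) U_M`
(`D` the diagonal of those eigenvalues) gives `‖T c‖² ≤ δ ‖c‖²` with
`δ = 4 ‖M - P‖² / λ_d(P)²`; otherwise `δ ≥ 1` and this is trivial. Hence the squared singular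
values `s_i` of `A` lie in `[1 - δ, 1]`. For `δ < 1` the polar factor `V = A (AᵀA)^{-1/2}` is
orthogonal with `‖A - V‖_F² = ∑ (1 - √s_i)² ≤ ∑ (1 - s_i)² ≤ d δ²`; for `δ ≥ 1` take `V = 1`.
-/

section DotProduct

variable {m n : Type*} [Fintype m] [Fintype n]

lemma dotProduct_self_nonneg (x : n → ℝ) : 0 ≤ x ⬝ᵥ x := by
  simpa using dotProduct_star_self_nonneg x

lemma dotProduct_self_eq_norm_sq (x : n → ℝ) :
    x ⬝ᵥ x = ‖(WithLp.toLp 2 x : EuclideanSpace ℝ n)‖ ^ 2 := by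
  rw [← real_inner_self_eq_norm_sq, EuclideanSpace.inner_toLp_toLp, star_trivial]

lemma dotProduct_diagonal_mulVec [DecidableEq n] (g x : n → ℝ) :
    x ⬝ᵥ (diagonal g *ᵥ x) = ∑ i, g i * x i ^ 2 := by
  simp only [dotProduct, mulVec_diagonal, sq]
  exact Finset.sum_congr rfl fun i _ => by ring

lemma dotProduct_conj_mulVec (U : Matrix m n ℝ) (D : Matrix n n ℝ) (x : m → ℝ) :
    x ⬝ᵥ ((U * D * Uᵀ) *ᵥ x) = (Uᵀ *ᵥ x) ⬝ᵥ (D *ᵥ (Uᵀ *ᵥ x)) := by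
  rw [← mulVec_mulVec, ← mulVec_mulVec, ← dotProduct_transpose_mulVec, dotProduct_comm]

lemma mulVec_dotProduct_mulVec_of_orthonormal [DecidableEq n] {U : Matrix m n ℝ} (hU : Uᵀ * U = 1)
    (x y : n → ℝ) : (U *ᵥ x) ⬝ᵥ (U *ᵥ y) = x ⬝ᵥ y := by
  rw [dotProduct_comm, ← dotProduct_transpose_mulVec, mulVec_mulVec, hU, one_mulVec]

lemma dotProduct_self_add_proj_compl [DecidableEq n] {U : Matrix m n ℝ} (hU : Uᵀ * U = 1)
    (v : m → ℝ) :
    (Uᵀ *ᵥ v) ⬝ᵥ (Uᵀ *ᵥ v) + (v - (U * Uᵀ) *ᵥ v) ⬝ᵥ (v - (U * Uᵀ) *ᵥ v) = v ⬝ᵥ v := by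
  have hvq : v ⬝ᵥ ((U * Uᵀ) *ᵥ v) = (Uᵀ *ᵥ v) ⬝ᵥ (Uᵀ *ᵥ v) := by
    rw [← mulVec_mulVec, ← dotProduct_transpose_mulVec]
  have hqq : ((U * Uᵀ) *ᵥ v) ⬝ᵥ ((U * Uᵀ) *ᵥ v) = (Uᵀ *ᵥ v) ⬝ᵥ (Uᵀ *ᵥ v) := by
    rw [← mulVec_mulVec, mulVec_dotProduct_mulVec_of_orthonormal hU]
  rw [sub_dotProduct, dotProduct_sub, dotProduct_sub, dotProduct_comm ((U * Uᵀ) *ᵥ v) v, hvq, hqq]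
  ring

lemma exists_ne_zero_mulVec_eq_zero {K : Type*} [Field K] (A : Matrix m n K)
    (h : Fintype.card m < Fintype.card n) : ∃ c ≠ 0, A *ᵥ c = 0 := by
  have hker := LinearMap.ker_ne_bot_of_finrank_lt (f := A.mulVecLin) (by simpa using h)
  obtain ⟨c, hc, hc0⟩ := (Submodule.ne_bot_iff _).mp hker
  exact ⟨c, hc0, hc⟩

end DotProduct

section SpecNorm

variable {n : ℕ}

lemma norm_toLp_mulVec_le_specNorm (N : Matrix (Fin n) (Fin n) ℝ) (x : Fin n → ℝ) :
    ‖(WithLp.toLp 2 (N *ᵥ x) : EuclideanSpace ℝ (Fin n))‖ ≤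
      specNorm N * ‖(WithLp.toLp 2 x : EuclideanSpace ℝ (Fin n))‖ := by
  rw [← toEuclideanCLM_toLp]
  exact (toEuclideanCLM (𝕜 := ℝ) N).le_opNorm _

lemma mulVec_dotProduct_self_le_specNorm_sq (N : Matrix (Fin n) (Fin n) ℝ) (x : Fin n → ℝ) :
    (N *ᵥ x) ⬝ᵥ (N *ᵥ x) ≤ specNorm N ^ 2 * (x ⬝ᵥ x) := by
  rw [dotProduct_self_eq_norm_sq, dotProduct_self_eq_norm_sq, ← mul_pow]
  exact pow_le_pow_left₀ (norm_nonneg _) (norm_toLp_mulVec_le_specNorm N x) 2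

lemma abs_dotProduct_mulVec_le_specNorm (N : Matrix (Fin n) (Fin n) ℝ) (x : Fin n → ℝ) :
    |x ⬝ᵥ (N *ᵥ x)| ≤ specNorm N * (x ⬝ᵥ x) := by
  let e : (Fin n → ℝ) → EuclideanSpace ℝ (Fin n) := WithLp.toLp 2
  calc |x ⬝ᵥ (N *ᵥ x)| = |inner ℝ (e (N *ᵥ x)) (e x)| := by
        rw [EuclideanSpace.inner_toLp_toLp, star_trivial]
    _ ≤ ‖e (N *ᵥ x)‖ * ‖e x‖ := abs_real_inner_le_norm _ _
    _ ≤ specNorm N * ‖e x‖ * ‖e x‖ := by gcongr; exact norm_toLp_mulVec_le_specNorm N x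
    _ = specNorm N * (x ⬝ᵥ x) := by rw [dotProduct_self_eq_norm_sq]; ring

end SpecNorm

section Frobenius

variable {m n d : ℕ}

lemma frobNorm_eq_sqrt_trace (M : Matrix (Fin m) (Fin n) ℝ) :
    frobNorm M = Real.sqrt (trace (Mᵀ * M)) := by
  rw [frobNorm, Finset.sum_comm]
  simp [trace, mul_apply, sq]

open scoped Matrix.Norms.Frobenius in
lemma frobNorm_eq_norm (M : Matrix (Fin m) (Fin n) ℝ) : frobNorm M = ‖M‖ := by
  rw [frobNorm, frobenius_norm_def, Real.sqrt_eq_rpow]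
  simp

open scoped Matrix.Norms.Frobenius in
lemma frobNorm_sub_le (A B : Matrix (Fin m) (Fin n) ℝ) :
    frobNorm (A - B) ≤ frobNorm A + frobNorm B := by
  simpa only [frobNorm_eq_norm] using norm_sub_le A B

lemma frobNorm_one : frobNorm (1 : Matrix (Fin d) (Fin d) ℝ) = Real.sqrt d := by
  simp [frobNorm_eq_sqrt_trace]

lemma frobNorm_orthonormal_mul {V : Matrix (Fin m) (Fin d) ℝ} (hV : Vᵀ * V = 1)
    (X : Matrix (Fin d) (Fin n) ℝ) : frobNorm (V * X) = frobNorm X := by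
  rw [frobNorm_eq_sqrt_trace, frobNorm_eq_sqrt_trace, transpose_mul, Matrix.mul_assoc,
    ← Matrix.mul_assoc Vᵀ, hV, Matrix.one_mul]

end Frobenius

section Orthogonal

variable {n : Type*} [Fintype n] [DecidableEq n]

lemma exists_orthogonal_diagonalization {S : Matrix n n ℝ} (hS : S.IsSymm) :
    ∃ (O : Matrix n n ℝ) (s : n → ℝ), Oᵀ * O = 1 ∧ O * Oᵀ = 1 ∧ S = O * diagonal s * Oᵀ := by
  have hH : S.IsHermitian := by
    simpa [IsHermitian, conjTranspose_eq_transpose_of_trivial] using hS.eq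
  refine ⟨hH.eigenvectorUnitary, hH.eigenvalues, ?_, ?_, ?_⟩
  · simpa [star_eq_conjTranspose] using Unitary.coe_star_mul_self hH.eigenvectorUnitary
  · simpa [star_eq_conjTranspose] using Unitary.coe_mul_star_self hH.eigenvectorUnitary
  · simpa [star_eq_conjTranspose, conjTranspose_eq_transpose_of_trivial] using hH.spectral_theorem

variable {O : Matrix n n ℝ}

lemma conj_diagonal_mul_conj_diagonal (hO : Oᵀ * O = 1) (g h : n → ℝ) :
    O * diagonal g * Oᵀ * (O * diagonal h * Oᵀ) = O * diagonal (fun i => g i * h i) * Oᵀ := by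
  rw [← diagonal_mul_diagonal]
  simp only [Matrix.mul_assoc]
  rw [← Matrix.mul_assoc Oᵀ, hO, Matrix.one_mul]

lemma trace_conj (hO : Oᵀ * O = 1) (D : Matrix n n ℝ) : trace (O * D * Oᵀ) = trace D := by
  rw [trace_mul_comm, ← Matrix.mul_assoc, hO, Matrix.one_mul]

lemma eq_dotProduct_mulVec_of_diagonalization {S : Matrix n n ℝ} {s : n → ℝ} (hO : Oᵀ * O = 1)
    (hS : S = O * diagonal s * Oᵀ) (i : n) :
    s i = (O *ᵥ Pi.single i 1) ⬝ᵥ (S *ᵥ (O *ᵥ Pi.single i 1)) := by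
  rw [hS, dotProduct_conj_mulVec, mulVec_mulVec, hO, one_mulVec, dotProduct_diagonal_mulVec]
  simp [Pi.single_apply]

end Orthogonal

section Polar

variable {d : ℕ}

lemma frobNorm_conj_diagonal {O : Matrix (Fin d) (Fin d) ℝ} (hO : Oᵀ * O = 1) (g : Fin d → ℝ) :
    frobNorm (O * diagonal g * Oᵀ) = Real.sqrt (∑ i, g i ^ 2) := by
  have hsymm : (O * diagonal g * Oᵀ)ᵀ = O * diagonal g * Oᵀ := by
    simp only [transpose_mul, transpose_transpose, diagonal_transpose, Matrix.mul_assoc]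
  rw [frobNorm_eq_sqrt_trace, hsymm, conj_diagonal_mul_conj_diagonal hO, trace_conj hO,
    trace_diagonal]
  simp only [sq]

lemma exists_orthogonal_frobNorm_sub_eq {A O : Matrix (Fin d) (Fin d) ℝ} {s : Fin d → ℝ}
    (hO : Oᵀ * O = 1) (hO' : O * Oᵀ = 1) (hS : Aᵀ * A = O * diagonal s * Oᵀ)
    (hs : ∀ i, 0 < s i) :
    ∃ V : Matrix (Fin d) (Fin d) ℝ, Vᵀ * V = 1 ∧
      frobNorm (A - V) = Real.sqrt (∑ i, (Real.sqrt (s i) - 1) ^ 2) := by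
  set R := O * diagonal (fun i => (Real.sqrt (s i))⁻¹) * Oᵀ
  set V := A * R
  have hsqrt : ∀ i, Real.sqrt (s i) ≠ 0 := fun i => (Real.sqrt_pos.mpr (hs i)).ne'
  have hRT : Rᵀ = R := by
    simp only [R, transpose_mul, transpose_transpose, diagonal_transpose, Matrix.mul_assoc]
  have hR : R * (O * diagonal (fun i => Real.sqrt (s i)) * Oᵀ) = 1 := by
    rw [conj_diagonal_mul_conj_diagonal hO]
    simp only [inv_mul_cancel₀ (hsqrt _), diagonal_one, Matrix.mul_one, hO']
  have hV : Vᵀ * V = 1 := by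
    calc Vᵀ * V = R * (Aᵀ * A) * R := by simp only [V, transpose_mul, hRT, Matrix.mul_assoc]
      _ = 1 := by
        rw [hS, conj_diagonal_mul_conj_diagonal hO, conj_diagonal_mul_conj_diagonal hO]
        have hrsr : (fun i => (Real.sqrt (s i))⁻¹ * s i * (Real.sqrt (s i))⁻¹) = fun _ => 1 :=
          funext fun i => by field_simp; rw [Real.sq_sqrt (hs i).le, div_self (hs i).ne']
        rw [hrsr, diagonal_one, Matrix.mul_one, hO']
  have hAV : A - V = V * (O * diagonal (fun i => Real.sqrt (s i) - 1) * Oᵀ) := by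
    have : diagonal (fun i => Real.sqrt (s i) - 1) = diagonal (fun i => Real.sqrt (s i)) - 1 := by
      rw [← diagonal_one, ← diagonal_sub]
    rw [this, Matrix.mul_sub, Matrix.sub_mul, Matrix.mul_one, hO', Matrix.mul_sub, Matrix.mul_one,
      Matrix.mul_assoc A, hR, Matrix.mul_one]
  exact ⟨V, hV, by rw [hAV, frobNorm_orthonormal_mul hV, frobNorm_conj_diagonal hO]⟩

theorem exists_orthogonal_frobNorm_sub_le (A : Matrix (Fin d) (Fin d) ℝ) {δ : ℝ}
    (hδ : 0 ≤ δ) (hA : ∀ c, (A *ᵥ c) ⬝ᵥ (A *ᵥ c) ≤ c ⬝ᵥ c)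
    (hA' : ∀ c, (1 - δ) * (c ⬝ᵥ c) ≤ (A *ᵥ c) ⬝ᵥ (A *ᵥ c)) :
    ∃ V : Matrix (Fin d) (Fin d) ℝ, Vᵀ * V = 1 ∧ frobNorm (A - V) ≤ 2 * Real.sqrt d * δ := by
  obtain ⟨O, s, hO, hO', hS⟩ := exists_orthogonal_diagonalization (isSymm_transpose_mul_self A)
  have hs : ∀ i, 1 - δ ≤ s i ∧ s i ≤ 1 := by
    intro i
    set o := O *ᵥ Pi.single i 1
    have hoo : o ⬝ᵥ o = 1 := by
      rw [mulVec_dotProduct_mulVec_of_orthonormal hO]; simp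
    have hso : s i = (A *ᵥ o) ⬝ᵥ (A *ᵥ o) := by
      rw [eq_dotProduct_mulVec_of_diagonalization hO hS, ← mulVec_mulVec,
        dotProduct_transpose_mulVec]
    exact ⟨by simpa [hoo, hso] using hA' o, by simpa [hoo, hso] using hA o⟩
  rcases lt_or_ge δ 1 with hδ1 | hδ1
  · obtain ⟨V, hV, hAV⟩ := exists_orthogonal_frobNorm_sub_eq hO hO' hS
      fun i => by linarith [(hs i).1]
    refine ⟨V, hV, hAV ▸ ?_⟩
    -- `|1 - √s| ≤ |1 - s|` for `s ≥ 0`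
    have hterm : ∀ i, (Real.sqrt (s i) - 1) ^ 2 ≤ δ ^ 2 := by
      intro i
      have h0 := Real.sqrt_nonneg (s i)
      have h1 : Real.sqrt (s i) ≤ 1 := Real.sqrt_le_one.mpr (hs i).2
      have h2 := Real.sq_sqrt (by linarith [(hs i).1] : 0 ≤ s i)
      nlinarith [(hs i).1]
    calc Real.sqrt (∑ i, (Real.sqrt (s i) - 1) ^ 2) ≤ Real.sqrt (d * δ ^ 2) := by
          gcongr
          simpa using Finset.sum_le_sum (s := Finset.univ) fun i _ => hterm i
      _ = Real.sqrt d * δ := by rw [Real.sqrt_mul (Nat.cast_nonneg d), Real.sqrt_sq hδ]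
      _ ≤ 2 * Real.sqrt d * δ := by nlinarith [Real.sqrt_nonneg d]
  · refine ⟨1, by simp, ?_⟩
    have hA_frob : frobNorm A ≤ Real.sqrt d := by
      rw [frobNorm_eq_sqrt_trace, hS, trace_conj hO, trace_diagonal]
      gcongr
      simpa using Finset.sum_le_sum (s := Finset.univ) fun i _ => (hs i).2
    calc frobNorm (A - 1) ≤ frobNorm A + frobNorm 1 := frobNorm_sub_le A 1
      _ ≤ 2 * Real.sqrt d * 1 := by rw [frobNorm_one]; linarith
      _ ≤ 2 * Real.sqrt d * δ := by gcongr

end Polar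

section Perturbation

variable {n d : ℕ}

lemma topCols_transpose_mul_self (hdn : d ≤ n) {W : Matrix (Fin n) (Fin n) ℝ}
    (hW : Wᵀ * W = 1) : (topCols hdn W)ᵀ * topCols hdn W = 1 := by
  rw [topCols, transpose_submatrix, ← submatrix_mul _ _ _ _ _ Function.bijective_id, hW,
    submatrix_one _ (Fin.castLE_injective hdn)]

lemma mul_topCols (hdn : d ≤ n) {W M : Matrix (Fin n) (Fin n) ℝ} {mu : Fin n → ℝ}
    (hW : Wᵀ * W = 1) (hM : M = W * diagonal mu * Wᵀ) :
    M * topCols hdn W = topCols hdn W * diagonal (fun j => mu (Fin.castLE hdn j)) := by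
  have hMW : M * W = W * diagonal mu := by rw [hM, Matrix.mul_assoc, hW, Matrix.mul_one]
  rw [topCols, ← submatrix_id_id M, ← submatrix_mul _ _ _ _ _ Function.bijective_id, hMW]
  ext i j
  simp [mul_diagonal]

lemma transpose_mul_mulVec_dotProduct_self_add {UP UM : Matrix (Fin n) (Fin d) ℝ}
    (hUP : UPᵀ * UP = 1) (hUM : UMᵀ * UM = 1) (c : Fin d → ℝ) :
    ((UPᵀ * UM) *ᵥ c) ⬝ᵥ ((UPᵀ * UM) *ᵥ c) +
      ((UM - UP * UPᵀ * UM) *ᵥ c) ⬝ᵥ ((UM - UP * UPᵀ * UM) *ᵥ c) = c ⬝ᵥ c := by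
  rw [← mulVec_mulVec, sub_mulVec, ← mulVec_mulVec, dotProduct_self_add_proj_compl hUP,
    mulVec_dotProduct_mulVec_of_orthonormal hUM]

lemma dotProduct_mulVec_le_of_orthogonal_top {W M : Matrix (Fin n) (Fin n) ℝ}
    {mu : Fin n → ℝ} (hW : Wᵀ * W = 1) (hmu : Antitone mu) (hM : M = W * diagonal mu * Wᵀ)
    (k : Fin n) {x : Fin n → ℝ} (hx : ∀ i < k, (Wᵀ *ᵥ x) i = 0) :
    x ⬝ᵥ (M *ᵥ x) ≤ mu k * (x ⬝ᵥ x) := by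
  have hWW : Wᵀᵀ * Wᵀ = 1 := by rw [transpose_transpose]; exact mul_eq_one_comm.mp hW
  rw [hM, dotProduct_conj_mulVec, dotProduct_diagonal_mulVec,
    ← mulVec_dotProduct_mulVec_of_orthonormal hWW x x, dotProduct, Finset.mul_sum]
  refine Finset.sum_le_sum fun i _ => ?_
  rcases lt_or_ge i k with hi | hi
  · simp [hx i hi]
  · rw [← sq]
    exact mul_le_mul_of_nonneg_right (hmu hi) (sq_nonneg _)

lemma le_dotProduct_mulVec_conj_diagonal {U : Matrix (Fin n) (Fin d) ℝ} (hU : Uᵀ * U = 1)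
    {lam : Fin d → ℝ} {l : ℝ} (hl : ∀ j, l ≤ lam j) (c : Fin d → ℝ) :
    l * (c ⬝ᵥ c) ≤ (U *ᵥ c) ⬝ᵥ ((U * diagonal lam * Uᵀ) *ᵥ (U *ᵥ c)) := by
  rw [dotProduct_conj_mulVec, mulVec_mulVec, hU, one_mulVec, dotProduct_diagonal_mulVec,
    dotProduct, Finset.mul_sum]
  refine Finset.sum_le_sum fun j _ => ?_
  rw [← sq]
  exact mul_le_mul_of_nonneg_right (hl j) (sq_nonneg _)

theorem sub_specNorm_le_eigenvalue_of_lt {UP : Matrix (Fin n) (Fin d) ℝ} (hUP : UPᵀ * UP = 1)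
    {lam : Fin d → ℝ} {l : ℝ} (hl : ∀ j, l ≤ lam j) {W : Matrix (Fin n) (Fin n) ℝ}
    {mu : Fin n → ℝ} (hW : Wᵀ * W = 1) (hmu : Antitone mu) {P M : Matrix (Fin n) (Fin n) ℝ}
    (hP : P = UP * diagonal lam * UPᵀ) (hM : M = W * diagonal mu * Wᵀ) (k : Fin n)
    (hk : (k : ℕ) < d) : l - specNorm (M - P) ≤ mu k := by
  obtain ⟨c, hc, hKc⟩ := exists_ne_zero_mulVec_eq_zero
    ((Wᵀ * UP).submatrix (Fin.castLE k.is_lt.le) id) (by simpa using hk)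
  set x := UP *ᵥ c
  have hxx : x ⬝ᵥ x = c ⬝ᵥ c := mulVec_dotProduct_mulVec_of_orthonormal hUP c c
  have hx : ∀ i < k, (Wᵀ *ᵥ x) i = 0 := fun i hi => by
    simp only [x, mulVec_mulVec]
    simpa [mulVec, dotProduct] using congrFun hKc ⟨i, hi⟩
  have hupper := dotProduct_mulVec_le_of_orthogonal_top hW hmu hM k hx
  have hlower : l * (c ⬝ᵥ c) ≤ x ⬝ᵥ (P *ᵥ x) := hP ▸ le_dotProduct_mulVec_conj_diagonal hUP hl c
  have hpert := abs_dotProduct_mulVec_le_specNorm (M - P) x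
  have hcc : 0 < c ⬝ᵥ c := by simpa using dotProduct_self_star_pos_iff.mpr hc
  rw [sub_mulVec, dotProduct_sub, hxx] at hpert
  rw [hxx] at hupper
  refine le_of_mul_le_mul_right ?_ hcc
  rw [sub_mul]
  linarith [(abs_le.mp hpert).1]

end Perturbation

section SinTheta

variable {n d : ℕ}

theorem proj_compl_mulVec_dotProduct_self_le {UP UM : Matrix (Fin n) (Fin d) ℝ}
    (hUP : UPᵀ * UP = 1) (hUM : UMᵀ * UM = 1) {P M : Matrix (Fin n) (Fin n) ℝ}
    (hP : UP * UPᵀ * P = P) {ν : Fin d → ℝ} (hMUM : M * UM = UM * diagonal ν) {m : ℝ}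
    (hm : 0 < m) (hν : ∀ j, m ≤ ν j) (c : Fin d → ℝ) :
    ((UM - UP * UPᵀ * UM) *ᵥ c) ⬝ᵥ ((UM - UP * UPᵀ * UM) *ᵥ c) ≤
      (specNorm (M - P) / m) ^ 2 * (c ⬝ᵥ c) := by
  set Q := UP * UPᵀ
  set u : Fin d → ℝ := fun j => c j / ν j
  set v := (M - P) *ᵥ (UM *ᵥ u)
  have hνpos : ∀ j, 0 < ν j := fun j => hm.trans_le (hν j)
  have hTν : (UM - Q * UM) * diagonal ν = (M - P) * UM - Q * ((M - P) * UM) := by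
    have hQP : Q * (P * UM) = P * UM := by rw [← Matrix.mul_assoc, hP]
    rw [Matrix.sub_mul, Matrix.mul_assoc, ← hMUM, Matrix.sub_mul, Matrix.mul_sub, hQP]
    abel
  have hcu : c = diagonal ν *ᵥ u := by
    funext j
    simp [u, mulVec_diagonal, mul_div_cancel₀ _ (hνpos j).ne']
  have hT : (UM - Q * UM) *ᵥ c = v - Q *ᵥ v := by
    rw [hcu, mulVec_mulVec, hTν, sub_mulVec]
    simp only [v, mulVec_mulVec]
  have huu : u ⬝ᵥ u ≤ (1 / m) ^ 2 * (c ⬝ᵥ c) := by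
    rw [dotProduct, dotProduct, Finset.mul_sum]
    refine Finset.sum_le_sum fun j _ => ?_
    calc u j * u j = c j * c j / (ν j * ν j) := div_mul_div_comm _ _ _ _
      _ ≤ c j * c j / (m * m) :=
        div_le_div_of_nonneg_left (mul_self_nonneg _) (mul_pos hm hm)
          (mul_self_le_mul_self hm.le (hν j))
      _ = (1 / m) ^ 2 * (c j * c j) := by ring
  calc ((UM - Q * UM) *ᵥ c) ⬝ᵥ ((UM - Q * UM) *ᵥ c) ≤ v ⬝ᵥ v := by
        rw [hT, ← dotProduct_self_add_proj_compl hUP v]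
        linarith [dotProduct_self_nonneg (UPᵀ *ᵥ v)]
    _ ≤ specNorm (M - P) ^ 2 * ((UM *ᵥ u) ⬝ᵥ (UM *ᵥ u)) :=
        mulVec_dotProduct_self_le_specNorm_sq _ _
    _ ≤ specNorm (M - P) ^ 2 * ((1 / m) ^ 2 * (c ⬝ᵥ c)) := by
        rw [mulVec_dotProduct_mulVec_of_orthonormal hUM]
        gcongr
    _ = (specNorm (M - P) / m) ^ 2 * (c ⬝ᵥ c) := by ring

theorem topCols_sinTheta_le (hd : 0 < d) (hdn : d ≤ n) {UP : Matrix (Fin n) (Fin d) ℝ}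
    (hUP : UPᵀ * UP = 1) {lam : Fin d → ℝ} {l : ℝ} (hl0 : 0 < l) (hl : ∀ j, l ≤ lam j)
    {W : Matrix (Fin n) (Fin n) ℝ} {mu : Fin n → ℝ} (hW : Wᵀ * W = 1) (hmu : Antitone mu)
    {P M : Matrix (Fin n) (Fin n) ℝ} (hP : P = UP * diagonal lam * UPᵀ)
    (hM : M = W * diagonal mu * Wᵀ) (c : Fin d → ℝ) :
    ((topCols hdn W - UP * UPᵀ * topCols hdn W) *ᵥ c) ⬝ᵥ
        ((topCols hdn W - UP * UPᵀ * topCols hdn W) *ᵥ c) ≤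
      4 * specNorm (M - P) ^ 2 / l ^ 2 * (c ⬝ᵥ c) := by
  have hUM := topCols_transpose_mul_self hdn hW
  rcases lt_or_ge (2 * specNorm (M - P)) l with hε | hε
  · have hweyl :=
      sub_specNorm_le_eigenvalue_of_lt hUP hl hW hmu hP hM ⟨d - 1, by omega⟩ (by simp; omega)
    have hν : ∀ j : Fin d, l / 2 ≤ mu (Fin.castLE hdn j) := fun j => by
      have := hmu (show Fin.castLE hdn j ≤ ⟨d - 1, by omega⟩ from Fin.le_def.mpr (by simp; omega))
      linarith
    have hQP : UP * UPᵀ * P = P := by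
      rw [hP]
      simp only [Matrix.mul_assoc]
      rw [← Matrix.mul_assoc UPᵀ UP, hUP, Matrix.one_mul]
    calc _ ≤ (specNorm (M - P) / (l / 2)) ^ 2 * (c ⬝ᵥ c) :=
          proj_compl_mulVec_dotProduct_self_le hUP hUM hQP (mul_topCols hdn hW hM)
            (by positivity) hν c
      _ = _ := by field_simp; ring
  · have hone : 1 ≤ 4 * specNorm (M - P) ^ 2 / l ^ 2 := by
      rw [le_div_iff₀ (by positivity)]
      nlinarith
    calc _ ≤ c ⬝ᵥ c := by
          rw [← transpose_mul_mulVec_dotProduct_self_add hUP hUM c]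
          linarith [dotProduct_self_nonneg ((UPᵀ * topCols hdn W) *ᵥ c)]
      _ ≤ _ := le_mul_of_one_le_left (dotProduct_self_nonneg c) hone

end SinTheta

/-- Proposition B.1. Procrustes alignment of the product of top
eigenvector matrices: there is an orthogonal `V` with
`‖U_Pᵀ U_M − V‖_F ≤ C d ‖M − P‖² / λ_d(P)²`. -/
theorem stmt5 :
    ∃ C : ℝ, 0 < C ∧
      ∀ (n d : ℕ) (hd : 0 < d) (hdn : d ≤ n)
        (UP : Matrix (Fin n) (Fin d) ℝ) (lam : Fin d → ℝ),
        UPᵀ * UP = 1 → (∀ k, 0 < lam k) → (∀ k l : Fin d, k ≤ l → lam l ≤ lam k) →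
      ∀ lamd : ℝ, lamd = lam ⟨d - 1, Nat.sub_lt hd Nat.one_pos⟩ →
      ∀ P M : Matrix (Fin n) (Fin n) ℝ,
        P = UP * Matrix.diagonal lam * UPᵀ → Mᵀ = M →
      ∀ (W : Matrix (Fin n) (Fin n) ℝ) (mu : Fin n → ℝ),
        Wᵀ * W = 1 → (∀ k l : Fin n, k ≤ l → mu l ≤ mu k) →
        M = W * Matrix.diagonal mu * Wᵀ →
      ∃ V : Matrix (Fin d) (Fin d) ℝ, Vᵀ * V = 1 ∧
        frobNorm (UPᵀ * topCols hdn W - V) ≤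
          C * d * specNorm (M - P) ^ 2 / lamd ^ 2 := by
  refine ⟨8, by norm_num, ?_⟩
  intro n d hd hdn UP lam hUP hlam_pos hlam lamd hlamd P M hP _ W mu hW hmu hM
  have hl0 : 0 < lamd := hlamd ▸ hlam_pos _
  have hl : ∀ j, lamd ≤ lam j := fun j => hlamd ▸ hlam j _ (Fin.le_def.mpr (by simp; omega))
  set δ := 4 * specNorm (M - P) ^ 2 / lamd ^ 2
  have hsin := topCols_sinTheta_le hd hdn hUP hl0 hl hW hmu hP hM
  have hsplit := transpose_mul_mulVec_dotProduct_self_add hUP (topCols_transpose_mul_self hdn hW)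
  obtain ⟨V, hV, hAV⟩ := exists_orthogonal_frobNorm_sub_le (UPᵀ * topCols hdn W) (δ := δ)
    (by positivity)
    (fun c => by
      have := dotProduct_self_nonneg ((topCols hdn W - UP * UPᵀ * topCols hdn W) *ᵥ c)
      linarith [hsplit c])
    (fun c => by rw [sub_mul, one_mul]; linarith [hsplit c, hsin c])
  refine ⟨V, hV, hAV.trans ?_⟩
  have hsqrt : Real.sqrt d ≤ d := Real.sqrt_le_self_iff.mpr (Or.inr (by exact_mod_cast hd))
  calc 2 * Real.sqrt d * δ ≤ 2 * d * δ := by gcongr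
    _ = 8 * d * specNorm (M - P) ^ 2 / lamd ^ 2 := by ring
end

section
/- Let ℓ ≥ 2 be an even integer. There exists a constant C_ℓ > 0 depending only on ℓ such that the following holds. Let n ≥ 1 and let A be a random symmetric n×n matrix with E A = P ∈ ℝ^{n×n}, whose upper-triangular error entries {(A − P)_{ij} : 1 ≤ i ≤ j ≤ n} are mutually independent (ν, b)-sub-gamma random variables. Define ρ̃ = ∑_{1≤i≤j≤n} (A − P)_{ij}² / (16 n(n+1)) and τ = E ρ̃. Then for every t > 0, Pr[|ρ̃ − τ| > t] ≤ C_ℓ (ν + b²)^ℓ / (n t)^ℓ. -/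
open Matrix MeasureTheory ProbabilityTheory
open scoped BigOperators ENNReal

/-- A centered real random variable `Z` is `(ν, b)`-sub-gamma if both `Z` and `−Z` have
cumulant generating function satisfying `ψ(t) ≤ t²ν/(2(1 − bt))` for all `0 < t` with
`bt < 1` (for all `t > 0` when `b = 0`). -/
def IsSubGamma {Ω : Type*} [MeasurableSpace Ω] (μ : Measure Ω) (Z : Ω → ℝ) (ν b : ℝ) : Prop :=
  0 ≤ ν ∧ 0 ≤ b ∧ Integrable Z μ ∧ (∫ ω, Z ω ∂μ) = 0 ∧
  ∀ t : ℝ, 0 < t → b * t < 1 →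
    Integrable (fun ω => Real.exp (t * Z ω)) μ ∧
    Integrable (fun ω => Real.exp (-(t * Z ω))) μ ∧
    Real.log (∫ ω, Real.exp (t * Z ω) ∂μ) ≤ t ^ 2 * ν / (2 * (1 - b * t)) ∧
    Real.log (∫ ω, Real.exp (-(t * Z ω)) ∂μ) ≤ t ^ 2 * ν / (2 * (1 - b * t))

/-!
Write `X_q = Z_q ^ 2 - E Z_q ^ 2` for the centred squared errors `Z_q = (A - P)_q`, `q = (i, j)`
with `i ≤ j`, so that `ρ̃ - τ = (∑ q, X_q) / (16 n (n + 1))`. A `(ν, b)`-sub-gamma variable has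
exponential moments `E exp (± t Z) ≤ 2` at `t = 1 / (2 √s)` for every `s > ν + b²`, which
bounds its even moments by `4 (2k)! (4 (ν + b²)) ^ k`, and hence
`E |X_q| ^ c ≤ (64 (2ℓ)! (ν + b²)) ^ c` for `1 ≤ c ≤ ℓ`.
Expanding `E (∑ q, X_q) ^ ℓ` into monomials, independence kills those in which some `X_q` occurs
exactly once; the remaining ones involve at most `ℓ / 2` of the at most `n²` indices, so
`E (∑ q, X_q) ^ ℓ ≤ n ^ ℓ ℓ ^ ℓ (64 (2ℓ)! (ν + b²)) ^ ℓ`, and Markov's inequality for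
`(∑ q, X_q) ^ ℓ` concludes.
-/

open Real Finset Filter Topology
open scoped Nat

lemma pow_two_mul_le_factorial_mul_exp_add_exp_neg (x : ℝ) (k : ℕ) :
    x ^ (2 * k) ≤ (2 * k)! * (exp x + exp (-x)) := by
  have h := pow_div_factorial_le_exp _ (abs_nonneg x) (2 * k)
  rw [(even_two_mul k).pow_abs, div_le_iff₀ (by positivity)] at h
  have : exp |x| ≤ exp x + exp (-x) := by
    rcases abs_choice x with h | h <;> rw [h] <;> linarith [exp_pos x, exp_pos (-x)]
  nlinarith [(2 * k).factorial_pos]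

section ExponentialMoments

variable {Ω : Type*} [MeasurableSpace Ω] {μ : Measure Ω} {Z : Ω → ℝ} {t : ℝ}

lemma pow_two_mul_le_factorial_div_pow_mul_exp_add_exp_neg (ht : 0 < t) (k : ℕ) (x : ℝ) :
    x ^ (2 * k) ≤ (2 * k)! / t ^ (2 * k) * (exp (t * x) + exp (-(t * x))) := by
  rw [div_mul_eq_mul_div, le_div_iff₀ (by positivity), mul_comm, ← mul_pow]
  exact pow_two_mul_le_factorial_mul_exp_add_exp_neg (t * x) k

lemma integrable_pow_two_mul_of_integrable_exp (hZ : AEStronglyMeasurable Z μ) (ht : 0 < t)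
    (h₁ : Integrable (fun ω => exp (t * Z ω)) μ) (h₂ : Integrable (fun ω => exp (-(t * Z ω))) μ)
    (k : ℕ) : Integrable (fun ω => Z ω ^ (2 * k)) μ :=
  ((h₁.add h₂).const_mul _).mono' (hZ.pow _) (ae_of_all _ fun ω => by
    rw [Real.norm_eq_abs, abs_of_nonneg ((even_two_mul k).pow_nonneg _)]
    exact pow_two_mul_le_factorial_div_pow_mul_exp_add_exp_neg ht k (Z ω))

lemma integral_pow_two_mul_le_of_integrable_exp (hZ : AEStronglyMeasurable Z μ) (ht : 0 < t)
    (h₁ : Integrable (fun ω => exp (t * Z ω)) μ) (h₂ : Integrable (fun ω => exp (-(t * Z ω))) μ)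
    (k : ℕ) : ∫ ω, Z ω ^ (2 * k) ∂μ ≤
      (2 * k)! / t ^ (2 * k) * ((∫ ω, exp (t * Z ω) ∂μ) + ∫ ω, exp (-(t * Z ω)) ∂μ) := by
  rw [← integral_add h₁ h₂, ← integral_const_mul]
  exact integral_mono (integrable_pow_two_mul_of_integrable_exp hZ ht h₁ h₂ k)
    ((h₁.add h₂).const_mul _)
    fun ω => pow_two_mul_le_factorial_div_pow_mul_exp_add_exp_neg ht k (Z ω)

end ExponentialMoments

lemma le_two_of_log_le_quarter {x : ℝ} (hx : 0 ≤ x) (h : log x ≤ 1 / 4) : x ≤ 2 := by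
  rcases hx.eq_or_lt with rfl | hx
  · norm_num
  · exact (log_le_log_iff hx two_pos).1 (h.trans (by linarith [log_two_gt_d9]))

lemma abs_sub_pow_le_pow_add_pow {a m : ℝ} (ha : 0 ≤ a) (hm : 0 ≤ m) (c : ℕ) :
    |a - m| ^ c ≤ a ^ c + m ^ c := by
  have h : |a - m| ≤ max a m :=
    abs_sub_le_iff.2 ⟨by linarith [le_max_left a m], by linarith [le_max_right a m]⟩
  rcases max_choice a m with hmax | hmax <;> rw [hmax] at h
  · exact (pow_le_pow_left₀ (abs_nonneg _) h c).trans (le_add_of_nonneg_right (pow_nonneg hm c))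
  · exact (pow_le_pow_left₀ (abs_nonneg _) h c).trans (le_add_of_nonneg_left (pow_nonneg ha c))

namespace IsSubGamma

variable {Ω : Type*} [MeasurableSpace Ω] {μ : Measure Ω} {Z : Ω → ℝ} {ν b : ℝ}

lemma aestronglyMeasurable (hZ : IsSubGamma μ Z ν b) : AEStronglyMeasurable Z μ :=
  hZ.2.2.1.aestronglyMeasurable

lemma integral_pow_two_mul_le_of_le (hZ : IsSubGamma μ Z ν b) {s : ℝ} (hs : 0 < s)
    (hνb : ν + b ^ 2 ≤ s) (k : ℕ) :
    Integrable (fun ω => Z ω ^ (2 * k)) μ ∧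
      ∫ ω, Z ω ^ (2 * k) ∂μ ≤ 4 * (2 * k)! * (4 * s) ^ k := by
  have hZm := hZ.aestronglyMeasurable
  obtain ⟨hν, hb, -, -, hcgf⟩ := hZ
  set t : ℝ := (2 * √s)⁻¹
  have hsqrt : 0 < √s := sqrt_pos.2 hs
  have ht : 0 < t := by positivity
  have ht2 : t ^ 2 = (4 * s)⁻¹ := by
    rw [inv_pow, mul_pow, sq_sqrt hs.le]; norm_num
  have hbt : b * t ≤ 1 / 2 := by
    have : b ≤ √s := (le_sqrt hb hs.le).2 (by linarith)
    rw [mul_inv_le_iff₀ (by positivity)]; linarith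
  have hψ : t ^ 2 * ν / (2 * (1 - b * t)) ≤ 1 / 4 := by
    have : t ^ 2 * ν ≤ 1 / 4 := by
      rw [ht2, inv_mul_le_iff₀ (by positivity)]; nlinarith
    rw [div_le_iff₀ (by linarith)]; nlinarith [sq_nonneg t]
  obtain ⟨h₁, h₂, hψ₁, hψ₂⟩ := hcgf t ht (by linarith)
  have hE₁ := le_two_of_log_le_quarter (integral_nonneg fun _ => (exp_pos _).le) (hψ₁.trans hψ)
  have hE₂ := le_two_of_log_le_quarter (integral_nonneg fun _ => (exp_pos _).le) (hψ₂.trans hψ)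
  refine ⟨integrable_pow_two_mul_of_integrable_exp hZm ht h₁ h₂ k, ?_⟩
  calc ∫ ω, Z ω ^ (2 * k) ∂μ
      ≤ (2 * k)! / t ^ (2 * k) * ((∫ ω, exp (t * Z ω) ∂μ) + ∫ ω, exp (-(t * Z ω)) ∂μ) :=
        integral_pow_two_mul_le_of_integrable_exp hZm ht h₁ h₂ k
    _ ≤ (2 * k)! / t ^ (2 * k) * 4 := by gcongr; linarith
    _ = 4 * (2 * k)! * (4 * s) ^ k := by rw [pow_mul, ht2, inv_pow, div_inv_eq_mul]; ring

lemma nonneg_add_sq (hZ : IsSubGamma μ Z ν b) : 0 ≤ ν + b ^ 2 := by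
  have := hZ.1; positivity

lemma integrable_pow_two_mul (hZ : IsSubGamma μ Z ν b) (k : ℕ) :
    Integrable (fun ω => Z ω ^ (2 * k)) μ :=
  (hZ.integral_pow_two_mul_le_of_le (by linarith [hZ.nonneg_add_sq])
    (le_add_of_nonneg_right zero_le_one) k).1

lemma integral_pow_two_mul_le (hZ : IsSubGamma μ Z ν b) (k : ℕ) :
    ∫ ω, Z ω ^ (2 * k) ∂μ ≤ 4 * (2 * k)! * (4 * (ν + b ^ 2)) ^ k := by
  -- `ν + b ^ 2` may vanish, so approach it from above
  have hlim : Tendsto (fun s : ℝ => 4 * (2 * k)! * (4 * s) ^ k) (𝓝[>] (ν + b ^ 2))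
      (𝓝 (4 * (2 * k)! * (4 * (ν + b ^ 2)) ^ k)) :=
    (Continuous.tendsto (by fun_prop) _).mono_left nhdsWithin_le_nhds
  refine ge_of_tendsto hlim (eventually_nhdsWithin_of_forall fun s (hs : ν + b ^ 2 < s) => ?_)
  exact (hZ.integral_pow_two_mul_le_of_le (hZ.nonneg_add_sq.trans_lt hs) hs.le k).2

variable [IsProbabilityMeasure μ]

lemma integrable_abs_sq_sub_integral_pow (hZ : IsSubGamma μ Z ν b) (c : ℕ) :
    Integrable (fun ω => |Z ω ^ 2 - ∫ ω', Z ω' ^ 2 ∂μ| ^ c) μ := by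
  have hZm := hZ.aestronglyMeasurable
  set m := ∫ ω', Z ω' ^ 2 ∂μ
  refine ((hZ.integrable_pow_two_mul c).add (integrable_const (m ^ c))).mono' (by fun_prop)
    (ae_of_all _ fun ω => ?_)
  rw [Real.norm_eq_abs, abs_of_nonneg (by positivity), Pi.add_apply, pow_mul]
  exact abs_sub_pow_le_pow_add_pow (sq_nonneg _) (integral_nonneg fun _ => sq_nonneg _) c

lemma integral_abs_sq_sub_integral_pow_le (hZ : IsSubGamma μ Z ν b) (c : ℕ) :
    ∫ ω, |Z ω ^ 2 - ∫ ω', Z ω' ^ 2 ∂μ| ^ c ∂μ ≤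
      4 * (2 * c)! * (4 * (ν + b ^ 2)) ^ c + (32 * (ν + b ^ 2)) ^ c := by
  set m := ∫ ω', Z ω' ^ 2 ∂μ
  have hm : 0 ≤ m := integral_nonneg fun _ => sq_nonneg _
  have hm32 : m ≤ 32 * (ν + b ^ 2) := by
    have := hZ.integral_pow_two_mul_le 1
    norm_num at this; linarith
  calc ∫ ω, |Z ω ^ 2 - m| ^ c ∂μ ≤ ∫ ω, (Z ω ^ (2 * c) + m ^ c) ∂μ := by
        refine integral_mono (hZ.integrable_abs_sq_sub_integral_pow c)
          ((hZ.integrable_pow_two_mul c).add (integrable_const (m ^ c))) fun ω => ?_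
        rw [pow_mul]
        exact abs_sub_pow_le_pow_add_pow (sq_nonneg _) hm c
    _ = ∫ ω, Z ω ^ (2 * c) ∂μ + m ^ c := by
        rw [integral_add (hZ.integrable_pow_two_mul c) (integrable_const (m ^ c)), integral_const,
          probReal_univ, one_smul]
    _ ≤ _ := by gcongr; exact hZ.integral_pow_two_mul_le c

end IsSubGamma

section MomentMethod

variable {ι : Type*} [Fintype ι] [DecidableEq ι]

lemma prod_comp_eq_prod_pow_card_fiber {M : Type*} [CommMonoid M] {L : ℕ} (p : Fin L → ι)
    (f : ι → M) : ∏ i, f (p i) = ∏ q, f q ^ #{i | p i = q} := by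
  rw [← prod_fiberwise univ p]
  refine prod_congr rfl fun q _ => ?_
  rw [← prod_const]
  exact prod_congr rfl fun i hi => by rw [(mem_filter.1 hi).2]

lemma sum_card_fiber_eq {L : ℕ} (p : Fin L → ι) : ∑ q, #{i | p i = q} = L := by
  rw [← card_eq_sum_card_fiberwise fun i _ => mem_univ (p i)]
  simp

lemma card_filter_card_image_le [Nonempty ι] (L h : ℕ) :
    #{p : Fin L → ι | #(univ.image p) ≤ h} ≤ Fintype.card ι ^ h * h ^ L := by
  calc #{p : Fin L → ι | #(univ.image p) ≤ h}
      ≤ #(univ : Finset ((Fin h → ι) × (Fin L → Fin h))) := by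
        refine card_le_card_of_surjOn (fun ge => ge.1 ∘ ge.2) fun p hp => ?_
        replace hp : #(univ.image p) ≤ h := (mem_filter.1 hp).2
        set e := (univ.image p).equivFin
        have hmem (i : Fin L) : p i ∈ univ.image p := mem_image_of_mem p (mem_univ i)
        -- `p` factors through an enumeration of its image, extended to `Fin h` arbitrarily
        refine ⟨(Function.extend (Fin.castLE hp) (fun j => (e.symm j : ι))
          (fun _ => Classical.arbitrary ι), fun i => Fin.castLE hp (e ⟨p i, hmem i⟩)),
          mem_coe.2 (mem_univ _), funext fun i => ?_⟩
        simp only [Function.comp_apply, (Fin.castLE_injective hp).extend_apply,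
          Equiv.symm_apply_apply]
    _ = Fintype.card ι ^ h * h ^ L := by simp

lemma card_filter_card_fiber_ne_one_le [Nonempty ι] (L : ℕ) :
    #{p : Fin L → ι | ∀ q, #{i | p i = q} ≠ 1} ≤ Fintype.card ι ^ (L / 2) * L ^ L := by
  refine le_trans (card_le_card fun p hp => ?_)
    ((card_filter_card_image_le L (L / 2)).trans (Nat.mul_le_mul_left _
      (Nat.pow_le_pow_left (Nat.div_le_self L 2) L)))
  simp only [mem_filter, mem_univ, true_and] at hp ⊢
  have : 2 * #(univ.image p) ≤ L := by
    calc 2 * #(univ.image p) = ∑ _q ∈ univ.image p, 2 := by rw [sum_const, smul_eq_mul, mul_comm]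
      _ ≤ ∑ q ∈ univ.image p, #{i | p i = q} := sum_le_sum fun q hq => by
          obtain ⟨i, -, rfl⟩ := mem_image.1 hq
          have : 0 < #{j | p j = p i} := card_pos.2 ⟨i, by simp⟩
          have := hp (p i)
          omega
      _ = L := by rw [← card_eq_sum_card_image]; simp
  omega

end MomentMethod

section MomentBound

variable {Ω ι : Type*} [MeasurableSpace Ω] {μ : Measure Ω} {X : ι → Ω → ℝ} {L : ℕ}

lemma integrable_prod_comp_of_memLp [IsFiniteMeasure μ] (hX : ∀ i, MemLp (X i) L μ)
    (p : Fin L → ι) : Integrable (fun ω => ∏ i, X (p i) ω) μ := by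
  rw [← memLp_one_iff_integrable]
  refine (MemLp.prod' fun i _ => hX (p i)).mono_exponent ?_
  simp only [sum_const, card_univ, Fintype.card_fin, nsmul_eq_mul]
  exact ENNReal.one_le_inv.2 (ENNReal.mul_inv_le_one _)

variable [Fintype ι] [DecidableEq ι]

lemma integral_prod_comp_eq_prod_integral_pow (hind : iIndepFun X μ)
    (hX : ∀ i, AEMeasurable (X i) μ) (p : Fin L → ι) :
    ∫ ω, ∏ i, X (p i) ω ∂μ = ∏ q, ∫ ω, X q ω ^ #{i | p i = q} ∂μ := by
  simp_rw [fun ω => prod_comp_eq_prod_pow_card_fiber p (X · ω)]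
  exact hind.integral_fun_prod_comp hX fun q => (continuous_pow _).aestronglyMeasurable

lemma prod_integral_pow_card_fiber_le [IsProbabilityMeasure μ] {K : ℝ}
    (hmom : ∀ i c, 2 ≤ c → c ≤ L → ∫ ω, |X i ω| ^ c ∂μ ≤ K ^ c) {p : Fin L → ι}
    (hp : ∀ q, #{i | p i = q} ≠ 1) :
    ∏ q, ∫ ω, X q ω ^ #{i | p i = q} ∂μ ≤ K ^ L := by
  calc ∏ q, ∫ ω, X q ω ^ #{i | p i = q} ∂μ
      ≤ ∏ q, |∫ ω, X q ω ^ #{i | p i = q} ∂μ| := by rw [← abs_prod]; exact le_abs_self _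
    _ ≤ ∏ q, K ^ #{i | p i = q} := by
        refine prod_le_prod (fun _ _ => abs_nonneg _) fun q _ => ?_
        rcases Nat.eq_zero_or_pos #{i | p i = q} with h0 | hpos
        · simp [h0]
        have hle : #{i | p i = q} ≤ L := (card_filter_le _ _).trans (by simp)
        calc |∫ ω, X q ω ^ #{i | p i = q} ∂μ| ≤ ∫ ω, |X q ω| ^ #{i | p i = q} ∂μ := by
              simpa only [Real.norm_eq_abs, abs_pow] using
                norm_integral_le_integral_norm (fun ω => X q ω ^ #{i | p i = q})
          _ ≤ K ^ #{i | p i = q} := hmom q _ (by have := hp q; omega) hle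
    _ = K ^ L := by rw [prod_pow_eq_pow_sum, sum_card_fiber_eq]

theorem integral_sum_pow_le [Nonempty ι] {K : ℝ} (hK : 0 ≤ K) (hX : ∀ i, MemLp (X i) L μ)
    (hind : iIndepFun X μ) (hzero : ∀ i, ∫ ω, X i ω ∂μ = 0)
    (hmom : ∀ i c, 2 ≤ c → c ≤ L → ∫ ω, |X i ω| ^ c ∂μ ≤ K ^ c) :
    ∫ ω, (∑ i, X i ω) ^ L ∂μ ≤ Fintype.card ι ^ (L / 2) * L ^ L * K ^ L := by
  have := hind.isProbabilityMeasure
  set good := univ.filter fun p : Fin L → ι => ∀ q, #{i | p i = q} ≠ 1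
  calc ∫ ω, (∑ i, X i ω) ^ L ∂μ = ∑ p : Fin L → ι, ∏ q, ∫ ω, X q ω ^ #{i | p i = q} ∂μ := by
        simp_rw [Fintype.sum_pow]
        rw [integral_finsetSum _ fun p _ => integrable_prod_comp_of_memLp hX p]
        exact sum_congr rfl fun p _ => integral_prod_comp_eq_prod_integral_pow hind
          (fun i => (hX i).aestronglyMeasurable.aemeasurable) p
    _ = ∑ p ∈ good, ∏ q, ∫ ω, X q ω ^ #{i | p i = q} ∂μ := by
        refine (sum_filter_of_ne fun p _ hne => ?_).symm
        intro q hq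
        exact hne (prod_eq_zero (mem_univ q) (by simpa only [hq, pow_one] using hzero q))
    _ ≤ ∑ _p ∈ good, K ^ L :=
        sum_le_sum fun p hp => prod_integral_pow_card_fiber_le hmom (mem_filter.1 hp).2
    _ = #good * K ^ L := by rw [sum_const, nsmul_eq_mul]
    _ ≤ ((Fintype.card ι ^ (L / 2) * L ^ L : ℕ) : ℝ) * K ^ L := by
        gcongr; exact card_filter_card_fiber_ne_one_le L
    _ = Fintype.card ι ^ (L / 2) * L ^ L * K ^ L := by push_cast; ring

end MomentBound

section Tail

variable {Ω : Type*} [MeasurableSpace Ω] {μ : Measure Ω}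

lemma memLp_of_integrable_abs_pow {f : Ω → ℝ} (hf : AEStronglyMeasurable f μ) {L : ℕ}
    (h : Integrable (fun ω => |f ω| ^ L) μ) : MemLp f L μ := by
  rcases eq_or_ne L 0 with rfl | hL
  · simpa using hf
  · rw [← integrable_norm_rpow_iff hf (by exact_mod_cast hL) (ENNReal.natCast_ne_top L)]
    simpa [Real.norm_eq_abs] using h

lemma measure_lt_abs_le_integral_pow_div [IsFiniteMeasure μ] {S : Ω → ℝ} {L : ℕ} (hL : Even L)
    (hS : MemLp S L μ) {r : ℝ} (hr : 0 < r) :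
    μ {ω | r < |S ω|} ≤ ENNReal.ofReal ((∫ ω, S ω ^ L ∂μ) / r ^ L) := by
  have hint : Integrable (fun ω => S ω ^ L) μ := by
    simpa only [Real.norm_eq_abs, hL.pow_abs] using hS.integrable_norm_pow'
  have hmarkov := mul_meas_ge_le_integral_of_nonneg (ae_of_all _ fun ω => hL.pow_nonneg (S ω))
    hint (r ^ L)
  calc μ {ω | r < |S ω|} ≤ μ {ω | r ^ L ≤ S ω ^ L} := measure_mono fun ω (h : r < |S ω|) => by
        rw [Set.mem_ofPred_eq, ← hL.pow_abs (S ω)]; exact pow_le_pow_left₀ hr.le h.le L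
    _ = ENNReal.ofReal (μ.real {ω | r ^ L ≤ S ω ^ L}) := (ofReal_measureReal).symm
    _ ≤ ENNReal.ofReal ((∫ ω, S ω ^ L ∂μ) / r ^ L) :=
        ENNReal.ofReal_le_ofReal (by rw [le_div_iff₀ (by positivity)]; linarith)

end Tail

lemma four_mul_factorial_mul_pow_add_pow_le {c L : ℕ} (hc : 1 ≤ c) (hcL : c ≤ L) {s : ℝ}
    (hs : 0 ≤ s) : 4 * (2 * c)! * (4 * s) ^ c + (32 * s) ^ c ≤ (64 * (2 * L)! * s) ^ c := by
  have h4 : (4 : ℝ) * 4 ^ c ≤ 32 ^ c := by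
    rw [show (32 : ℝ) = 8 * 4 by norm_num, mul_pow]
    gcongr
    exact le_trans (by norm_num) (le_self_pow₀ (by norm_num : (1 : ℝ) ≤ 8) (by omega))
  have hfac : ((2 * c)! : ℝ) ≤ (2 * L)! := by exact_mod_cast Nat.factorial_le (by omega)
  have hone : (1 : ℝ) ≤ (2 * L)! := by exact_mod_cast (2 * L).factorial_pos
  calc 4 * (2 * c)! * (4 * s) ^ c + (32 * s) ^ c = (4 * 4 ^ c * (2 * c)! + 32 ^ c) * s ^ c := by
        ring
    _ ≤ (32 ^ c * (2 * L)! + 32 ^ c * (2 * L)!) * s ^ c := by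
        gcongr
        exact le_mul_of_one_le_right (by positivity) hone
    _ = 2 * (2 * L)! * 32 ^ c * s ^ c := by ring
    _ ≤ (2 * (2 * L)!) ^ c * 32 ^ c * s ^ c := by
        gcongr; exact le_self_pow₀ (by linarith) (by omega)
    _ = (64 * (2 * L)! * s) ^ c := by rw [← mul_pow, ← mul_pow]; ring_nf

theorem measure_lt_abs_sum_sq_sub_integral_le {Ω ι : Type*} [MeasurableSpace Ω] {μ : Measure Ω}
    [Fintype ι] [Nonempty ι] {Z : ι → Ω → ℝ} {ν b : ℝ} (hZ : ∀ i, IsSubGamma μ (Z i) ν b)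
    (hind : iIndepFun Z μ) {L : ℕ} (hL : Even L) {r : ℝ} (hr : 0 < r) :
    μ {ω | r < |∑ i, Z i ω ^ 2 - ∫ ω', ∑ i, Z i ω' ^ 2 ∂μ|} ≤
      ENNReal.ofReal
        (Fintype.card ι ^ (L / 2) * L ^ L * (64 * (2 * L)! * (ν + b ^ 2)) ^ L / r ^ L) := by
  classical
  have := hind.isProbabilityMeasure
  have hs := (hZ (Classical.arbitrary ι)).nonneg_add_sq
  set X : ι → Ω → ℝ := fun i ω => Z i ω ^ 2 - ∫ ω', Z i ω' ^ 2 ∂μ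
  have hX (i : ι) : MemLp (X i) L μ :=
    memLp_of_integrable_abs_pow (by have := (hZ i).aestronglyMeasurable; fun_prop)
      ((hZ i).integrable_abs_sq_sub_integral_pow L)
  have hzero (i : ι) : ∫ ω, X i ω ∂μ = 0 := by
    simp only [X, integral_sub ((hZ i).integrable_pow_two_mul 1) (integrable_const _)]
    simp
  have hmom (i : ι) (c : ℕ) (hc : 2 ≤ c) (hcL : c ≤ L) :
      ∫ ω, |X i ω| ^ c ∂μ ≤ (64 * (2 * L)! * (ν + b ^ 2)) ^ c :=
    ((hZ i).integral_abs_sq_sub_integral_pow_le c).trans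
      (four_mul_factorial_mul_pow_add_pow_le (by omega) hcL hs)
  have hsum (ω : Ω) : ∑ i, Z i ω ^ 2 - ∫ ω', ∑ i, Z i ω' ^ 2 ∂μ = ∑ i, X i ω := by
    rw [integral_finsetSum _ fun i _ => ((hZ i).integrable_pow_two_mul 1), ← sum_sub_distrib]
  simp_rw [hsum]
  refine (measure_lt_abs_le_integral_pow_div hL (memLp_finsetSum _ fun i _ => hX i) hr).trans
    (ENNReal.ofReal_le_ofReal ?_)
  gcongr
  exact integral_sum_pow_le (by positivity) hX
    (hind.comp _ fun _ => (measurable_id.pow_const 2).sub_const _) hzero hmom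

lemma sum_sum_ite_eq_sum_subtype {α R : Type*} [Fintype α] [AddCommMonoid R] (r : α → α → Prop)
    [DecidableRel r] (f : α → α → R) :
    ∑ i, ∑ j, (if r i j then f i j else 0) = ∑ q : {q : α × α // r q.1 q.2}, f q.1.1 q.1.2 := by
  rw [← Fintype.sum_prod_type', ← sum_filter]
  exact sum_subtype _ (fun q => by simp) (fun q : α × α => f q.1 q.2)

lemma card_pow_half_div_le {n ℓ : ℕ} (hn : 1 ≤ n) (hℓ : Even ℓ) {t : ℝ} (ht : 0 < t) :
    (Fintype.card {q : Fin n × Fin n // q.1 ≤ q.2} : ℝ) ^ (ℓ / 2) / (t * (16 * n * (n + 1))) ^ ℓ ≤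
      1 / (n * t) ^ ℓ := by
  have hcard : (Fintype.card {q : Fin n × Fin n // q.1 ≤ q.2} : ℝ) ≤ n ^ 2 := by
    exact_mod_cast (Fintype.card_subtype_le _).trans_eq (by simp [sq])
  have hn' : (1 : ℝ) ≤ n := by exact_mod_cast hn
  rw [div_le_div_iff₀ (by positivity) (by positivity), one_mul]
  calc (Fintype.card {q : Fin n × Fin n // q.1 ≤ q.2} : ℝ) ^ (ℓ / 2) * (n * t) ^ ℓ
      ≤ ((n : ℝ) ^ 2) ^ (ℓ / 2) * (n * t) ^ ℓ := by gcongr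
    _ = (n * (n * t)) ^ ℓ := by rw [← pow_mul, Nat.two_mul_div_two_of_even hℓ]; ring
    _ ≤ (t * (16 * n * (n + 1))) ^ ℓ := pow_le_pow_left₀ (by positivity) (by nlinarith) ℓ

theorem stmt13_general (ℓ : ℕ) (hℓeven : Even ℓ) :
    ∃ C : ℝ, 0 < C ∧
      ∀ (n : ℕ), 1 ≤ n →
      ∀ (Ω : Type) (_ : MeasurableSpace Ω) (μ : Measure Ω), IsProbabilityMeasure μ →
      ∀ (A : Ω → Matrix (Fin n) (Fin n) ℝ), (∀ i j, Measurable fun ω => A ω i j) → (∀ ω, (A ω)ᵀ = A ω) →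
      ∀ (P : Matrix (Fin n) (Fin n) ℝ) (ν b : ℝ),
      (∀ i j : Fin n, i ≤ j → IsSubGamma μ (fun ω => (A ω - P) i j) ν b) →
      iIndepFun
        (fun (q : {q : Fin n × Fin n // q.1 ≤ q.2}) ω => (A ω - P) q.1.1 q.1.2) μ →
      ∀ t : ℝ, 0 < t →
        μ {ω | t <
            |(∑ i, ∑ j, if i ≤ j then ((A ω - P) i j) ^ 2 else 0) / (16 * n * (n + 1) : ℝ)
              - ∫ ω', (∑ i, ∑ j, if i ≤ j then ((A ω' - P) i j) ^ 2 else 0)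
                  / (16 * n * (n + 1) : ℝ) ∂μ|}
          ≤ ENNReal.ofReal (C * (ν + b ^ 2) ^ ℓ / ((n : ℝ) * t) ^ ℓ) := by
  refine ⟨(ℓ : ℝ) ^ ℓ * (64 * (2 * ℓ)!) ^ ℓ,
    mul_pos (by exact_mod_cast Nat.pow_self_pos) (by positivity), ?_⟩
  intro n hn Ω _ μ _ A _ _ P ν b hZ hind t ht
  have : Nonempty {q : Fin n × Fin n // q.1 ≤ q.2} := ⟨⟨(⟨0, hn⟩, ⟨0, hn⟩), le_rfl⟩⟩
  have hN : (0 : ℝ) < 16 * n * (n + 1) := by positivity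
  calc _ = μ {ω | t * (16 * n * (n + 1)) <
        |∑ q : {q : Fin n × Fin n // q.1 ≤ q.2}, (A ω - P) q.1.1 q.1.2 ^ 2 -
          ∫ ω', ∑ q : {q : Fin n × Fin n // q.1 ≤ q.2}, (A ω' - P) q.1.1 q.1.2 ^ 2 ∂μ|} := by
        simp only [sum_sum_ite_eq_sum_subtype (· ≤ ·) fun i j => ((A _ - P) i j) ^ 2,
          integral_div, ← sub_div, abs_div, abs_of_pos hN, lt_div_iff₀ hN]
    _ ≤ _ := measure_lt_abs_sum_sq_sub_integral_le (fun q => hZ _ _ q.2) hind hℓeven (by positivity)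
    _ ≤ _ := ENNReal.ofReal_le_ofReal ?_
  have hcard := card_pow_half_div_le hn hℓeven ht
  calc _ = (ℓ : ℝ) ^ ℓ * (64 * (2 * ℓ)!) ^ ℓ * (ν + b ^ 2) ^ ℓ *
        ((Fintype.card {q : Fin n × Fin n // q.1 ≤ q.2} : ℝ) ^ (ℓ / 2) /
          (t * (16 * n * (n + 1))) ^ ℓ) := by rw [mul_pow _ (ν + b ^ 2)]; ring
    _ ≤ (ℓ : ℝ) ^ ℓ * (64 * (2 * ℓ)!) ^ ℓ * (ν + b ^ 2) ^ ℓ * (1 / (n * t) ^ ℓ) := by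
        have := (hZ ⟨0, hn⟩ ⟨0, hn⟩ le_rfl).nonneg_add_sq
        gcongr
    _ = _ := by ring

/-- Tail bound at the heart of Proposition 4.3: for an even `ℓ ≥ 2`
there is `C_ℓ` such that the empirical second-moment statistic
`ρ̃ = ∑_{i≤j} (A−P)_{ij}² / (16 n (n+1))` of a random symmetric matrix with independent
`(ν,b)`-sub-gamma upper-triangular errors satisfies
`Pr[|ρ̃ − E ρ̃| > t] ≤ C_ℓ (ν + b²)^ℓ / (n t)^ℓ` for every `t > 0`. -/
theorem stmt13 (ℓ : ℕ) (hℓ2 : 2 ≤ ℓ) (hℓeven : Even ℓ) :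
    ∃ C : ℝ, 0 < C ∧
      ∀ (n : ℕ), 1 ≤ n →
      ∀ (Ω : Type) (_ : MeasurableSpace Ω) (μ : Measure Ω), IsProbabilityMeasure μ →
      ∀ (A : Ω → Matrix (Fin n) (Fin n) ℝ), (∀ i j, Measurable fun ω => A ω i j) → (∀ ω, (A ω)ᵀ = A ω) →
      ∀ (P : Matrix (Fin n) (Fin n) ℝ) (ν b : ℝ),
      (∀ i j : Fin n, i ≤ j → IsSubGamma μ (fun ω => (A ω - P) i j) ν b) →
      iIndepFun
        (fun (q : {q : Fin n × Fin n // q.1 ≤ q.2}) ω => (A ω - P) q.1.1 q.1.2) μ →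
      ∀ t : ℝ, 0 < t →
        μ {ω | t <
            |(∑ i, ∑ j, if i ≤ j then ((A ω - P) i j) ^ 2 else 0) / (16 * n * (n + 1) : ℝ)
              - ∫ ω', (∑ i, ∑ j, if i ≤ j then ((A ω' - P) i j) ^ 2 else 0)
                  / (16 * n * (n + 1) : ℝ) ∂μ|}
          ≤ ENNReal.ofReal (C * (ν + b ^ 2) ^ ℓ / ((n : ℝ) * t) ^ ℓ) :=
  stmt13_general ℓ hℓeven
end

section
/- Let N ≥ 1, let τ_1,…,τ_N > 0 and ρ̂_1,…,ρ̂_N be real numbers, and let ε ∈ [0, 1/2] be such that |ρ̂_s − τ_s| ≤ ε τ_s for all s ∈ [N] (so in particular each ρ̂_s > 0). Define u_s = τ_s^{-1} / ∑_{t=1}^N τ_t^{-1} and ŵ_s = ρ̂_s^{-1} / ∑_{t=1}^N ρ̂_t^{-1}. Then for every s ∈ [N], |ŵ_s − u_s| ≤ (2ε/(1−ε)) u_s ≤ 4 ε u_s. -/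
open scoped BigOperators

/-- Deterministic weight-stability estimate (Proposition 4.5 core):
if each estimated scale `ρ̂ s` approximates the target `τ s` with relative error at most
`ε ≤ 1/2`, then the normalized inverse-scale weights built from the estimates approximate
the oracle weights with relative error at most `2ε/(1−ε) ≤ 4ε`. -/
theorem stmt15 (N : ℕ) (hN : 1 ≤ N) (τ ρhat : Fin N → ℝ) (hτ : ∀ s, 0 < τ s)
    (ε : ℝ) (hε0 : 0 ≤ ε) (hε : ε ≤ 1 / 2)
    (happrox : ∀ s, |ρhat s - τ s| ≤ ε * τ s) :
    (∀ s, 0 < ρhat s) ∧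
    ∀ s : Fin N,
      |(ρhat s)⁻¹ / (∑ t, (ρhat t)⁻¹) - (τ s)⁻¹ / (∑ t, (τ t)⁻¹)|
          ≤ (2 * ε / (1 - ε)) * ((τ s)⁻¹ / (∑ t, (τ t)⁻¹))
      ∧ (2 * ε / (1 - ε)) * ((τ s)⁻¹ / (∑ t, (τ t)⁻¹))
          ≤ 4 * ε * ((τ s)⁻¹ / (∑ t, (τ t)⁻¹)) := by
  have h1m : (0:ℝ) < 1 - ε := by linarith
  have h1p : (0:ℝ) < 1 + ε := by linarith
  have hlow : ∀ s, (1 - ε) * τ s ≤ ρhat s := by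
    intro s
    have h := (abs_le.mp (happrox s)).1
    nlinarith [hτ s]
  have hhigh : ∀ s, ρhat s ≤ (1 + ε) * τ s := by
    intro s
    have h := (abs_le.mp (happrox s)).2
    nlinarith [hτ s]
  have hρ : ∀ s, 0 < ρhat s := fun s =>
    lt_of_lt_of_le (mul_pos h1m (hτ s)) (hlow s)
  refine ⟨hρ, fun s => ?_⟩
  set S : ℝ := ∑ t, (τ t)⁻¹ with hS
  set Sh : ℝ := ∑ t, (ρhat t)⁻¹ with hSh
  have hSpos : 0 < S := by
    apply Finset.sum_pos (fun t _ => inv_pos.mpr (hτ t))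
    exact Finset.univ_nonempty_iff.mpr ⟨⟨0, hN⟩⟩
  have hinvlow : ∀ t, (1 + ε)⁻¹ * (τ t)⁻¹ ≤ (ρhat t)⁻¹ := by
    intro t
    rw [← mul_inv]
    exact inv_anti₀ (hρ t) (hhigh t)
  have hinvhigh : ∀ t, (ρhat t)⁻¹ ≤ (1 - ε)⁻¹ * (τ t)⁻¹ := by
    intro t
    rw [← mul_inv]
    exact inv_anti₀ (mul_pos h1m (hτ t)) (hlow t)
  have hShlow : (1 + ε)⁻¹ * S ≤ Sh := by
    rw [hS, hSh, Finset.mul_sum]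
    exact Finset.sum_le_sum fun t _ => hinvlow t
  have hShhigh : Sh ≤ (1 - ε)⁻¹ * S := by
    rw [hS, hSh, Finset.mul_sum]
    exact Finset.sum_le_sum fun t _ => hinvhigh t
  have hcpos : 0 < (1 + ε)⁻¹ * S := mul_pos (inv_pos.mpr h1p) hSpos
  have hupp : (ρhat s)⁻¹ / Sh ≤ ((1 - ε)⁻¹ * (τ s)⁻¹) / ((1 + ε)⁻¹ * S) :=
    div_le_div₀ (mul_nonneg (inv_pos.mpr h1m).le (inv_pos.mpr (hτ s)).le) (hinvhigh s) hcpos hShlow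
  have hlowb : ((1 + ε)⁻¹ * (τ s)⁻¹) / ((1 - ε)⁻¹ * S) ≤ (ρhat s)⁻¹ / Sh := by
    exact div_le_div₀ (inv_pos.mpr (hρ s)).le (hinvlow s)
      (lt_of_lt_of_le hcpos hShlow) hShhigh
  have hτs : 0 < (τ s)⁻¹ / S := div_pos (inv_pos.mpr (hτ s)) hSpos
  have hid1 : ((1 - ε)⁻¹ * (τ s)⁻¹) / ((1 + ε)⁻¹ * S)
      = (1 + 2 * ε / (1 - ε)) * ((τ s)⁻¹ / S) := by
    field_simp
    ring
  have hid2 : (1 - 2 * ε / (1 - ε)) * ((τ s)⁻¹ / S)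
      ≤ ((1 + ε)⁻¹ * (τ s)⁻¹) / ((1 - ε)⁻¹ * S) := by
    have : ((1 + ε)⁻¹ * (τ s)⁻¹) / ((1 - ε)⁻¹ * S)
        = ((1 - ε) / (1 + ε)) * ((τ s)⁻¹ / S) := by
      field_simp
    rw [this]
    apply mul_le_mul_of_nonneg_right _ hτs.le
    rw [show (1:ℝ) - 2 * ε / (1 - ε) = (1 - 3*ε)/(1 - ε) from by field_simp; ring,
      div_le_div_iff₀ h1m h1p]
    nlinarith
  constructor
  · rw [abs_le]
    constructor
    · nlinarith [hid2.trans hlowb]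
    · nlinarith [hupp.trans_eq hid1]
  · apply mul_le_mul_of_nonneg_right _ hτs.le
    rw [div_le_iff₀ h1m]
    nlinarith
end
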